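/- arXiv:1206.3072 — 7 statements merged into one kernel-verified Lean document; each statement's English description precedes it below -/
import Mathlib

section
/- Let (ℋ, μ) be a linear classification problem. The collection 𝒮_𝒟(ℋ,μ) = {[p > 0] : p ∈ 𝒟(ℋ,μ)} of supports of decorrelating reweightings is closed under countable unions (up to sets of μ-measure zero): if C_i = [p_i > 0] with p_i ∈ 𝒟(ℋ,μ) for all i ∈ ℕ, then ⋃_i C_i = [p > 0] for some p ∈ 𝒟(ℋ,μ). -/
/-!
Rescale each `p i` by a weight `c i > 0` small enough that `∑ c i ‖p i‖₁ < ∞`, and take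
`p = ∑ c i p i`. The series converges in `L¹` and almost everywhere, its positivity set is the
union of those of the `p i`, and whenever `g p` is integrable for a measurable `g`, the bound
`∑ |g| c i p i = |g p|` justifies exchanging sum and integral, so `∫ g p = ∑ c i ∫ g p i = 0`.
-/

open MeasureTheory Filter
open scoped ENNReal

theorem enorm_tsum_of_nonneg {ι : Type*} {a : ι → ℝ} (ha : ∀ i, 0 ≤ a i) (hs : Summable a) :
    ‖∑' i, a i‖ₑ = ∑' i, ‖a i‖ₑ := by
  simp only [Real.enorm_of_nonneg (tsum_nonneg ha), Real.enorm_of_nonneg (ha _),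
    ENNReal.ofReal_tsum_of_nonneg ha hs]

theorem tsum_pos_iff_of_nonneg {ι : Type*} {a : ι → ℝ} (ha : ∀ i, 0 ≤ a i) (hs : Summable a) :
    0 < ∑' i, a i ↔ ∃ i, 0 < a i := by
  refine ⟨fun hpos ↦ ?_, fun ⟨i, hi⟩ ↦ hs.tsum_pos ha i hi⟩
  by_contra! hzero
  simp [le_antisymm (hzero _) (ha _)] at hpos

section TsumOrOne

variable {α ι : Type*} {f : ι → α → ℝ}

/-- Patching the (in our use, null) divergence set with `1` keeps the positivity set equal to
the union of those of the `f i`. -/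
noncomputable def tsumOrOne (f : ι → α → ℝ) (a : α) : ℝ :=
  open Classical in if Summable fun i ↦ f i a then ∑' i, f i a else 1

theorem tsumOrOne_nonneg (hf0 : ∀ i a, 0 ≤ f i a) (a : α) : 0 ≤ tsumOrOne f a := by
  unfold tsumOrOne
  split_ifs
  exacts [tsum_nonneg (hf0 · a), zero_le_one]

theorem tsumOrOne_pos_iff (hf0 : ∀ i a, 0 ≤ f i a) (a : α) :
    0 < tsumOrOne f a ↔ ∃ i, 0 < f i a := by
  unfold tsumOrOne
  split_ifs with hs
  · exact tsum_pos_iff_of_nonneg (hf0 · a) hs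
  · refine ⟨fun _ ↦ ?_, fun _ ↦ zero_lt_one⟩
    by_contra! hzero
    exact hs (by simp [le_antisymm (hzero _) (hf0 _ a)])

theorem tsumOrOne_ae_eq [MeasurableSpace α] {μ : Measure α}
    (hs : ∀ᵐ a ∂μ, Summable fun i ↦ f i a) : tsumOrOne f =ᵐ[μ] fun a ↦ ∑' i, f i a :=
  hs.mono fun _ ha ↦ if_pos ha

end TsumOrOne

section SeriesOfFunctions

variable {α ι : Type*} [MeasurableSpace α] {μ : Measure α} [Countable ι] {f : ι → α → ℝ}

theorem ae_summable_of_tsum_lintegral_ne_top (hf : ∀ i, AEStronglyMeasurable (f i) μ)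
    (h : ∑' i, ∫⁻ a, ‖f i a‖ₑ ∂μ ≠ ∞) : ∀ᵐ a ∂μ, Summable fun i ↦ f i a := by
  have := summable_norm_of_tsum_eLpNorm_ne_top le_rfl hf
    (by simpa only [eLpNorm_one_eq_lintegral_enorm] using h)
  filter_upwards [this] with a ha using ha.of_norm

theorem aestronglyMeasurable_tsum (hf : ∀ i, AEStronglyMeasurable (f i) μ)
    (hs : ∀ᵐ a ∂μ, Summable fun i ↦ f i a) :
    AEStronglyMeasurable (fun a ↦ ∑' i, f i a) μ :=
  aestronglyMeasurable_of_tendsto_ae atTop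
    (fun s ↦ Finset.aestronglyMeasurable_fun_sum s fun i _ ↦ hf i)
    (hs.mono fun _ ha ↦ ha.hasSum)

theorem integrable_tsum_of_tsum_lintegral_ne_top (hf : ∀ i, AEStronglyMeasurable (f i) μ)
    (h : ∑' i, ∫⁻ a, ‖f i a‖ₑ ∂μ ≠ ∞) : Integrable (fun a ↦ ∑' i, f i a) μ := by
  refine ⟨aestronglyMeasurable_tsum hf (ae_summable_of_tsum_lintegral_ne_top hf h), ?_⟩
  calc ∫⁻ a, ‖∑' i, f i a‖ₑ ∂μ ≤ ∫⁻ a, ∑' i, ‖f i a‖ₑ ∂μ :=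
        lintegral_mono fun _ ↦ enorm_tsum_le_tsum_enorm
    _ = ∑' i, ∫⁻ a, ‖f i a‖ₑ ∂μ := lintegral_tsum fun i ↦ (hf i).enorm
    _ < ∞ := h.lt_top

theorem integral_mul_tsum_of_nonneg {g : α → ℝ} (hg : AEStronglyMeasurable g μ)
    (hf : ∀ i, AEStronglyMeasurable (f i) μ) (hf0 : ∀ i a, 0 ≤ f i a)
    (hs : ∀ᵐ a ∂μ, Summable fun i ↦ f i a) (hint : Integrable (fun a ↦ g a * ∑' i, f i a) μ) :
    ∫ a, g a * ∑' i, f i a ∂μ = ∑' i, ∫ a, g a * f i a ∂μ := by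
  simp_rw [← tsum_mul_left]
  refine integral_tsum (fun i ↦ hg.mul (hf i)) ?_
  rw [← lintegral_tsum (f := fun i a ↦ ‖g a * f i a‖ₑ) fun i ↦ (hg.mul (hf i)).enorm]
  have hnorm : ∀ᵐ a ∂μ, ∑' i, ‖g a * f i a‖ₑ = ‖g a * ∑' i, f i a‖ₑ := by
    filter_upwards [hs] with a ha
    simp only [enorm_mul, ENNReal.tsum_mul_left, enorm_tsum_of_nonneg (hf0 · a) ha]
  rw [lintegral_congr_ae hnorm]
  exact hint.2.ne

theorem integral_mul_tsum_eq_zero_of_nonneg {g : α → ℝ} (hg : AEStronglyMeasurable g μ)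
    (hf : ∀ i, AEStronglyMeasurable (f i) μ) (hf0 : ∀ i a, 0 ≤ f i a)
    (hs : ∀ᵐ a ∂μ, Summable fun i ↦ f i a) (h0 : ∀ i, ∫ a, g a * f i a ∂μ = 0) :
    ∫ a, g a * ∑' i, f i a ∂μ = 0 := by
  by_cases hint : Integrable (fun a ↦ g a * ∑' i, f i a) μ
  · simp [integral_mul_tsum_of_nonneg hg hf hf0 hs hint, h0]
  · exact integral_undef hint

theorem exists_pos_tsum_lintegral_mul_ne_top {p : ι → α → ℝ} (hp : ∀ i, Integrable (p i) μ) :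
    ∃ c : ι → ℝ, (∀ i, 0 < c i) ∧ ∑' i, ∫⁻ a, ‖c i * p i a‖ₑ ∂μ ≠ ∞ := by
  obtain ⟨δ, hδ_pos, hδ⟩ := ENNReal.exists_pos_tsum_mul_lt_of_countable one_ne_zero
    (fun i ↦ ∫⁻ a, ‖p i a‖ₑ ∂μ) fun i ↦ (hp i).2.ne
  refine ⟨fun i ↦ δ i, fun i ↦ hδ_pos i, ne_top_of_lt (lt_of_eq_of_lt (tsum_congr fun i ↦ ?_) hδ)⟩
  simp [enorm_mul, lintegral_const_mul' _ _ ENNReal.coe_ne_top, mul_comm]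

end SeriesOfFunctions

theorem supports_closed_under_countable_unions_general
    {X : Type*} [MeasurableSpace X]
    (μ : Measure (X × ℝ))
    (n : ℕ) (h : Fin n → X → ℝ)
    (hmeas : ∀ i, Measurable (h i))
    (p : ℕ → X × ℝ → ℝ)
    (hpint : ∀ i, Integrable (p i) μ)
    (hpnn : ∀ i z, 0 ≤ p i z)
    (hdec : ∀ i, ∀ lam : Fin n → ℝ,
      ∫ z, z.2 * (∑ j, lam j * h j z.1) * p i z ∂μ = 0) :
    ∃ pinf : X × ℝ → ℝ,
      Integrable pinf μ ∧ (∀ z, 0 ≤ pinf z) ∧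
      (∀ lam : Fin n → ℝ,
        ∫ z, z.2 * (∑ j, lam j * h j z.1) * pinf z ∂μ = 0) ∧
      {z | 0 < pinf z} = ⋃ i, {z | 0 < p i z} := by
  obtain ⟨c, hc_pos, hc_sum⟩ := exists_pos_tsum_lintegral_mul_ne_top hpint
  set f : ℕ → X × ℝ → ℝ := fun i z ↦ c i * p i z
  have hf_meas : ∀ i, AEStronglyMeasurable (f i) μ := fun i ↦ ((hpint i).const_mul (c i)).1
  have hf_nonneg : ∀ i z, 0 ≤ f i z := fun i z ↦ mul_nonneg (hc_pos i).le (hpnn i z)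
  have hf_summable := ae_summable_of_tsum_lintegral_ne_top hf_meas hc_sum
  have hf_ae := tsumOrOne_ae_eq hf_summable
  refine ⟨tsumOrOne f, (integrable_tsum_of_tsum_lintegral_ne_top hf_meas hc_sum).congr hf_ae.symm,
    tsumOrOne_nonneg hf_nonneg, fun lam ↦ ?_, ?_⟩
  · have hg : Measurable fun z : X × ℝ ↦ z.2 * ∑ j, lam j * h j z.1 := by fun_prop
    refine (integral_congr_ae (hf_ae.mono fun z hz ↦ congrArg _ hz)).trans ?_
    refine integral_mul_tsum_eq_zero_of_nonneg hg.aestronglyMeasurable hf_meas hf_nonneg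
      hf_summable fun i ↦ ?_
    simp only [f, mul_left_comm _ (c i), integral_const_mul, hdec, mul_zero]
  · ext z
    simp [tsumOrOne_pos_iff hf_nonneg, f, mul_pos_iff_of_pos_left (hc_pos _)]

theorem supports_closed_under_countable_unions
    {X : Type*} [MeasurableSpace X]
    (μ : Measure (X × ℝ)) [IsProbabilityMeasure μ]
    (n : ℕ) (h : Fin n → X → ℝ)
    (hmeas : ∀ i, Measurable (h i)) (hbd : ∀ i x, |h i x| ≤ 1)
    (p : ℕ → X × ℝ → ℝ)
    (hpint : ∀ i, Integrable (p i) μ)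
    (hpnn : ∀ i z, 0 ≤ p i z)
    (hdec : ∀ i, ∀ lam : Fin n → ℝ,
      ∫ z, z.2 * (∑ j, lam j * h j z.1) * p i z ∂μ = 0) :
    ∃ pinf : X × ℝ → ℝ,
      Integrable pinf μ ∧ (∀ z, 0 ≤ pinf z) ∧
      (∀ lam : Fin n → ℝ,
        ∫ z, z.2 * (∑ j, lam j * h j z.1) * pinf z ∂μ = 0) ∧
      {z | 0 < pinf z} = ⋃ i, {z | 0 < p i z} :=
  supports_closed_under_countable_unions_general μ n h hmeas p hpint hpnn hdec
end

section
/- Every linear classification problem (ℋ, μ) has a hard core: there exists 𝒞 ∈ 𝒮_𝒟(ℋ,μ) such that for every C ∈ 𝒮_𝒟(ℋ,μ), μ(C \ 𝒞) = 0. -/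
/-!
Supports of admissible densities are closed under countable unions up to null sets: rescale
admissible `q k` to `c k * q k` with summable integrals; the pointwise series is again integrable,
nonnegative, and, by dominated convergence with dominant `|F| * ∑ c k * q k`, still orthogonal to
every test function, while its support contains every `{q k > 0}`. In a finite measure space such
a family of sets has an a.e. greatest member, namely one whose measure attains the supremum.
-/

open MeasureTheory Filter

theorem exists_pos_summable_mul (a : ℕ → ℝ) (ha : ∀ k, 0 ≤ a k) :
    ∃ c : ℕ → ℝ, (∀ k, 0 < c k) ∧ Summable fun k => c k * a k := by
  refine ⟨fun k => (1 / 2) ^ k / (1 + a k), fun k => by have := ha k; positivity, ?_⟩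
  refine summable_geometric_two.of_nonneg_of_le (fun k => by have := ha k; positivity) fun k => ?_
  rw [div_mul_eq_mul_div, mul_div_assoc]
  exact mul_le_of_le_one_right (by positivity) ((div_le_one (by linarith [ha k])).2 (by linarith))

section

variable {α : Type*} [MeasurableSpace α] {μ : Measure α}

theorem exists_ae_greatest_of_seq_ae_le [IsFiniteMeasure μ] {β : Type*} {D : Set β}
    (S : β → Set α) (hD : D.Nonempty) (hS : ∀ b ∈ D, NullMeasurableSet (S b) μ)
    (hseq : ∀ b : ℕ → β, (∀ k, b k ∈ D) → ∃ c ∈ D, ∀ k, S (b k) ≤ᵐ[μ] S c) :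
    ∃ c ∈ D, ∀ b ∈ D, μ (S b \ S c) = 0 := by
  set T := (fun b => μ (S b)) '' D
  obtain ⟨u, -, hu, huT⟩ := exists_seq_tendsto_sSup (hD.image _) (OrderTop.bddAbove T)
  choose b hbD hbu using huT
  obtain ⟨c, hcD, hbc⟩ := hseq b hbD
  have hc : sSup T ≤ μ (S c) :=
    le_of_tendsto' hu fun k => hbu k ▸ measure_mono_ae (hbc k)
  refine ⟨c, hcD, fun b' hb'D => ?_⟩
  obtain ⟨c', hc'D, hbc'⟩ := hseq (fun k => if k = 0 then b' else c) fun k => by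
    split_ifs <;> assumption
  have hcc' : S c =ᵐ[μ] S c' :=
    ae_eq_of_ae_subset_of_measure_ge (by simpa using hbc' 1)
      ((le_sSup (Set.mem_image_of_mem _ hc'D)).trans hc) (hS c hcD) (measure_ne_top μ _)
  exact ae_le_set.mp ((by simpa using hbc' 0 : S b' ≤ᵐ[μ] S c').trans hcc'.symm.le)

theorem exists_integrable_ae_hasSum {E : Type*} [NormedAddCommGroup E] [CompleteSpace E]
    {f : ℕ → α → E} (hf : ∀ k, Integrable (f k) μ)
    (hsum : Summable fun k => ∫ z, ‖f k z‖ ∂μ) :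
    ∃ g, Integrable g μ ∧ ∀ᵐ z ∂μ, HasSum (fun k => f k z) (g z) := by
  have hL1 := Lp.hasSum_coeFn_tsum (f := fun k => (hf k).toL1 (f k))
    (tsum_enorm_ne_top_iff_summable_norm.2 (by simpa [L1.norm_of_fun_eq_integral_norm] using hsum))
  refine ⟨_, L1.integrable_coeFn (∑' k, (hf k).toL1 (f k)), ?_⟩
  filter_upwards [hL1, ae_all_iff.2 fun k => (hf k).coeFn_toL1] with z hz hk
  simpa only [hk] using hz

theorem integral_mul_eq_zero_of_ae_hasSum {F p : α → ℝ} {r : ℕ → α → ℝ}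
    (hF : AEStronglyMeasurable F μ) (hr : ∀ k, Integrable (r k) μ) (hr0 : ∀ k z, 0 ≤ r k z)
    (hp : ∀ᵐ z ∂μ, HasSum (fun k => r k z) (p z)) (horth : ∀ k, ∫ z, F z * r k z ∂μ = 0) :
    ∫ z, F z * p z ∂μ = 0 := by
  by_cases hFp : Integrable (fun z => F z * p z) μ
  swap
  · -- the Bochner integral of a non-integrable function is `0` by convention
    exact integral_undef hFp
  have hbound : Integrable (fun z => ∑' k, ‖F z‖ * r k z) μ := by
    refine hFp.norm.congr ?_
    filter_upwards [hp] with z hz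
    rw [tsum_mul_left, hz.tsum_eq, norm_mul, Real.norm_of_nonneg (hz.nonneg fun k => hr0 k z)]
  have hlim := hasSum_integral_of_dominated_convergence (F := fun k z => F z * r k z)
    (fun k z => ‖F z‖ * r k z)
    (fun k => hF.mul (hr k).1)
    (fun k => ae_of_all _ fun z => by rw [norm_mul, Real.norm_of_nonneg (hr0 k z)])
    (hp.mono fun z hz => hz.summable.mul_left _) hbound (hp.mono fun z hz => hz.mul_left (F z))
  simp only [horth] at hlim
  exact hlim.unique hasSum_zero

end

section OrthogonalDensities

variable {α ι : Type*} [MeasurableSpace α] {μ : Measure α} {F : ι → α → ℝ}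

def orthogonalDensities (μ : Measure α) (F : ι → α → ℝ) : Set (α → ℝ) :=
  {q | Integrable q μ ∧ (∀ z, 0 ≤ q z) ∧ ∀ i, ∫ z, F i z * q z ∂μ = 0}

theorem zero_mem_orthogonalDensities : (0 : α → ℝ) ∈ orthogonalDensities μ F :=
  ⟨integrable_zero _ _ _, fun _ => le_rfl, fun _ => by simp⟩

theorem const_mul_mem_orthogonalDensities {q : α → ℝ} (hq : q ∈ orthogonalDensities μ F)
    {c : ℝ} (hc : 0 ≤ c) : (fun z => c * q z) ∈ orthogonalDensities μ F := by
  obtain ⟨hqi, hq0, hqF⟩ := hq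
  refine ⟨hqi.const_mul c, fun z => mul_nonneg hc (hq0 z), fun i => ?_⟩
  simp_rw [mul_left_comm (F i _), integral_const_mul, hqF i, mul_zero]

theorem nullMeasurableSet_pos_of_mem_orthogonalDensities {q : α → ℝ}
    (hq : q ∈ orthogonalDensities μ F) : NullMeasurableSet {z | 0 < q z} μ :=
  nullMeasurableSet_lt aemeasurable_const hq.1.aemeasurable

theorem exists_mem_orthogonalDensities_pos_ae_le (hF : ∀ i, AEStronglyMeasurable (F i) μ)
    (q : ℕ → α → ℝ) (hq : ∀ k, q k ∈ orthogonalDensities μ F) :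
    ∃ p ∈ orthogonalDensities μ F, ∀ k, {z | 0 < q k z} ≤ᵐ[μ] {z | 0 < p z} := by
  obtain ⟨c, hc0, hcsum⟩ := exists_pos_summable_mul (fun k => ∫ z, q k z ∂μ)
    fun k => integral_nonneg (hq k).2.1
  set r : ℕ → α → ℝ := fun k z => c k * q k z
  have hr : ∀ k, r k ∈ orthogonalDensities μ F := fun k =>
    const_mul_mem_orthogonalDensities (hq k) (hc0 k).le
  have hrnorm : ∀ k, ∫ z, ‖r k z‖ ∂μ = c k * ∫ z, q k z ∂μ := fun k => by
    simp_rw [Real.norm_of_nonneg ((hr k).2.1 _), r, integral_const_mul]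
  obtain ⟨g, hg, hrg⟩ := exists_integrable_ae_hasSum (fun k => (hr k).1)
    (by simpa only [hrnorm] using hcsum)
  have hrp : ∀ᵐ z ∂μ, HasSum (fun k => r k z) (∑' k, r k z) :=
    hrg.mono fun z hz => hz.summable.hasSum
  refine ⟨fun z => ∑' k, r k z, ⟨?_, fun z => tsum_nonneg fun k => (hr k).2.1 z, fun i => ?_⟩, ?_⟩
  · exact hg.congr (hrg.mono fun z hz => hz.tsum_eq.symm)
  · exact integral_mul_eq_zero_of_ae_hasSum (hF i) (fun k => (hr k).1) (fun k => (hr k).2.1)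
      hrp fun k => (hr k).2.2 i
  · intro k
    filter_upwards [hrp] with z hz hqz
    exact (mul_pos (hc0 k) hqz).trans_le (hz.summable.le_tsum k fun j _ => (hr j).2.1 z)

end OrthogonalDensities

theorem hard_core_exists_general
    {X : Type*} [MeasurableSpace X]
    (μ : Measure (X × ℝ)) [IsProbabilityMeasure μ]
    (n : ℕ) (h : Fin n → X → ℝ)
    (hmeas : ∀ i, Measurable (h i)) :
    ∃ p : X × ℝ → ℝ,
      Integrable p μ ∧ (∀ z, 0 ≤ p z) ∧
      (∀ lam : Fin n → ℝ,
        ∫ z, z.2 * (∑ j, lam j * h j z.1) * p z ∂μ = 0) ∧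
      ∀ q : X × ℝ → ℝ,
        Integrable q μ → (∀ z, 0 ≤ q z) →
        (∀ lam : Fin n → ℝ,
          ∫ z, z.2 * (∑ j, lam j * h j z.1) * q z ∂μ = 0) →
        μ ({z | 0 < q z} \ {z | 0 < p z}) = 0 := by
  set F : (Fin n → ℝ) → X × ℝ → ℝ := fun lam z => z.2 * ∑ j, lam j * h j z.1
  have hF : ∀ lam, AEStronglyMeasurable (F lam) μ := fun lam => by fun_prop
  obtain ⟨p, hp, hmax⟩ := exists_ae_greatest_of_seq_ae_le (μ := μ) (fun q => {z | 0 < q z})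
    ⟨0, zero_mem_orthogonalDensities⟩ (fun q => nullMeasurableSet_pos_of_mem_orthogonalDensities)
    (exists_mem_orthogonalDensities_pos_ae_le hF)
  exact ⟨p, hp.1, hp.2.1, hp.2.2, fun q hq hq0 hqF => hmax q ⟨hq, hq0, hqF⟩⟩

theorem hard_core_exists
    {X : Type*} [MeasurableSpace X]
    (μ : Measure (X × ℝ)) [IsProbabilityMeasure μ]
    (n : ℕ) (h : Fin n → X → ℝ)
    (hmeas : ∀ i, Measurable (h i)) (hbd : ∀ i x, |h i x| ≤ 1) :
    ∃ p : X × ℝ → ℝ,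
      Integrable p μ ∧ (∀ z, 0 ≤ p z) ∧
      (∀ lam : Fin n → ℝ,
        ∫ z, z.2 * (∑ j, lam j * h j z.1) * p z ∂μ = 0) ∧
      ∀ q : X × ℝ → ℝ,
        Integrable q μ → (∀ z, 0 ≤ q z) →
        (∀ lam : Fin n → ℝ,
          ∫ z, z.2 * (∑ j, lam j * h j z.1) * q z ∂μ = 0) →
        μ ({z | 0 < q z} \ {z | 0 < p z}) = 0 :=
  hard_core_exists_general μ n h hmeas
end

section
/- With 𝒦 as above, suppose there exists λ ∈ ℝⁿ with μ(D ∩ [(Hλ)(x) ≠ 0]) > 0. Then there exists c > 0 such that for every λ ∈ ℝⁿ with μ(D ∩ [(Hλ)(x) ≠ 0]) > 0, ‖Hλ‖_{L^∞(μ_D)} / ‖λ^⊥‖₁ > c, where λ^⊥ is the orthogonal projection of λ onto 𝒦^⊥ and μ_D(S) := μ(D ∩ S). -/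
open MeasureTheory ENNReal

/-!
The map `λ ↦ ‖∑ⱼ λⱼ hⱼ‖_{L^∞(μ_D)}` is a seminorm `p` on `ℝⁿ` whose kernel lies in `𝒦`. In finite
dimension `p` is continuous, so it is bounded below by some `c > 0` on the unit sphere of
`(ker p)ᗮ`. Projecting `λ` onto `(ker p)ᗮ` changes neither `p λ` nor (as `𝒦ᗮ ≤ (ker p)ᗮ`) its
projection onto `𝒦ᗮ`, whence `c ‖λ^⊥‖₂ ≤ p λ`. Comparing `ℓ¹` with `ℓ²` and halving `c` makes the
inequality strict as soon as `p λ > 0`.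
-/

namespace Seminorm

section Kernel

variable {𝕜 E : Type*} [SeminormedRing 𝕜] [AddCommGroup E] [Module 𝕜 E] (p : Seminorm 𝕜 E)

def ker : Submodule 𝕜 E where
  carrier := {v | p v = 0}
  add_mem' {v w} (hv : p v = 0) (hw : p w = 0) :=
    le_antisymm ((map_add_le_add p v w).trans_eq (by rw [hv, hw, add_zero])) (apply_nonneg p _)
  zero_mem' := map_zero p
  smul_mem' c v (hv : p v = 0) := by rw [Set.mem_ofPred_eq, map_smul_eq_mul, hv, mul_zero]

theorem mem_ker {v : E} : v ∈ p.ker ↔ p v = 0 := Iff.rfl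

theorem apply_eq_of_sub_mem_ker {v w : E} (h : v - w ∈ p.ker) : p v = p w := by
  have := abs_sub_map_le_sub p v w
  rw [(p.mem_ker).1 h] at this
  exact sub_eq_zero.1 (abs_nonpos_iff.1 this)

end Kernel

theorem continuous_of_finiteDimensional {E : Type*} [NormedAddCommGroup E] [NormedSpace ℝ E]
    [FiniteDimensional ℝ E] (p : Seminorm ℝ E) : Continuous p :=
  continuousOn_univ.1 (p.convexOn.continuousOn isOpen_univ)

variable {E : Type*} [NormedAddCommGroup E] [InnerProductSpace ℝ E] [FiniteDimensional ℝ E]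
  (p : Seminorm ℝ E)

theorem exists_pos_mul_norm_le_of_mem_orthogonal_ker :
    ∃ c > 0, ∀ w ∈ p.kerᗮ, c * ‖w‖ ≤ p w := by
  set S := (p.kerᗮ : Set E) ∩ Metric.sphere 0 1
  have hS : IsCompact S :=
    (isCompact_sphere 0 1).inter_left (Submodule.closed_of_finiteDimensional _)
  have hpos : ∀ u ∈ S, 0 < p u := fun u ⟨hu, hu1⟩ => by
    refine (apply_nonneg p u).lt_of_ne fun h0 => ?_
    have : u = 0 := inner_self_eq_zero.1 (hu u (p.mem_ker.2 h0.symm))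
    simp [this] at hu1
  obtain ⟨c, hc, hcS⟩ := hS.exists_forall_le' p.continuous_of_finiteDimensional.continuousOn hpos
  refine ⟨c, hc, fun w hw => ?_⟩
  rcases eq_or_ne w 0 with rfl | hw0
  · simp
  have hnorm : 0 < ‖w‖ := norm_pos_iff.2 hw0
  have hu : ‖w‖⁻¹ • w ∈ S :=
    ⟨p.kerᗮ.smul_mem _ hw, by simp [norm_smul, hnorm.ne']⟩
  have := hcS _ hu
  rw [map_smul_eq_mul, norm_inv, norm_norm] at this
  exact (le_inv_mul_iff₀' hnorm).1 this

theorem exists_pos_mul_norm_starProjection_le {K : Submodule ℝ E} (hK : p.ker ≤ K) :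
    ∃ c > 0, ∀ v, c * ‖Kᗮ.starProjection v‖ ≤ p v := by
  obtain ⟨c, hc, hcp⟩ := p.exists_pos_mul_norm_le_of_mem_orthogonal_ker
  refine ⟨c, hc, fun v => ?_⟩
  set w := p.kerᗮ.starProjection v
  have hproj : Kᗮ.starProjection w = Kᗮ.starProjection v := by
    simpa only [ContinuousLinearMap.comp_apply] using
      congr($(Submodule.starProjection_comp_starProjection_of_le (Submodule.orthogonal_le hK)) v)
  have hpw : p w = p v := p.apply_eq_of_sub_mem_ker <| by
    rw [← neg_mem_iff, neg_sub, ← Submodule.orthogonal_orthogonal p.ker]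
    exact Submodule.sub_starProjection_mem_orthogonal v
  calc c * ‖Kᗮ.starProjection v‖ = c * ‖Kᗮ.starProjection w‖ := by rw [hproj]
    _ ≤ c * ‖w‖ := by gcongr; exact Submodule.norm_starProjection_apply_le _ _
    _ ≤ p w := hcp w (Submodule.starProjection_apply_mem _ v)
    _ = p v := hpw

end Seminorm

theorem EuclideanSpace.sum_abs_le_card_mul_norm {ι : Type*} [Fintype ι]
    (w : EuclideanSpace ℝ ι) : ∑ i, |w i| ≤ Fintype.card ι * ‖w‖ := by
  calc ∑ i, |w i| ≤ ∑ _i : ι, ‖w‖ := Finset.sum_le_sum fun i _ => PiLp.norm_apply_le w i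
    _ = Fintype.card ι * ‖w‖ := by simp

section EssSup

variable {Y ι : Type*} [MeasurableSpace Y] (ν : Measure Y)

theorem eLpNormEssSup_finset_sum_le {F : Type*} [NormedAddCommGroup F] (s : Finset ι)
    (f : ι → Y → F) : eLpNormEssSup (∑ i ∈ s, f i) ν ≤ ∑ i ∈ s, eLpNormEssSup (f i) ν :=
  Finset.le_sum_of_subadditive (fun f : Y → F => eLpNormEssSup f ν) eLpNormEssSup_zero.le
    (fun _ _ => eLpNormEssSup_add_le) s f

variable {ν} [Fintype ι] {g : ι → Y → ℝ}

theorem eLpNormEssSup_linearCombination_ne_top (hg : ∀ i, eLpNormEssSup (g i) ν ≠ ∞)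
    (a : ι → ℝ) : eLpNormEssSup (fun y => ∑ i, a i * g i y) ν ≠ ∞ := by
  have hfun : (fun y => ∑ i, a i * g i y) = ∑ i, a i • g i := by
    ext y; simp [Finset.sum_apply]
  rw [hfun]
  refine ne_top_of_le_ne_top ?_ (eLpNormEssSup_finset_sum_le ν _ _)
  simp [eLpNormEssSup_const_smul, ENNReal.mul_ne_top, hg]

variable (ν) in
noncomputable def essSupCombinationSeminorm (hg : ∀ i, eLpNormEssSup (g i) ν ≠ ∞) :
    Seminorm ℝ (EuclideanSpace ℝ ι) :=
  Seminorm.of (fun a => (eLpNormEssSup (fun y => ∑ i, a i * g i y) ν).toReal)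
    (fun a b => by
      have hadd : (fun y => ∑ i, (a + b) i * g i y) =
          (fun y => ∑ i, a i * g i y) + (fun y => ∑ i, b i * g i y) := by
        ext y; simp [add_mul, Finset.sum_add_distrib]
      rw [hadd, ← ENNReal.toReal_add (eLpNormEssSup_linearCombination_ne_top hg a)
        (eLpNormEssSup_linearCombination_ne_top hg b)]
      exact ENNReal.toReal_mono (ENNReal.add_ne_top.2 ⟨eLpNormEssSup_linearCombination_ne_top hg a,
        eLpNormEssSup_linearCombination_ne_top hg b⟩) eLpNormEssSup_add_le)
    (fun r a => by
      have hsmul : (fun y => ∑ i, (r • a) i * g i y) = r • (fun y => ∑ i, a i * g i y) := by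
        ext y; simp [Finset.mul_sum, mul_assoc]
      rw [hsmul, eLpNormEssSup_const_smul, ENNReal.toReal_mul, toReal_enorm])

variable (hg : ∀ i, eLpNormEssSup (g i) ν ≠ ∞)

theorem ofReal_essSupCombinationSeminorm (a : EuclideanSpace ℝ ι) :
    ENNReal.ofReal (essSupCombinationSeminorm ν hg a) =
      eLpNormEssSup (fun y => ∑ i, a i * g i y) ν :=
  ENNReal.ofReal_toReal (eLpNormEssSup_linearCombination_ne_top hg a)

theorem essSupCombinationSeminorm_eq_zero_iff (a : EuclideanSpace ℝ ι) :
    essSupCombinationSeminorm ν hg a = 0 ↔ (fun y => ∑ i, a i * g i y) =ᵐ[ν] 0 := by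
  rw [← eLpNormEssSup_eq_zero_iff, ← ofReal_essSupCombinationSeminorm hg,
    ENNReal.ofReal_eq_zero, (apply_nonneg _ a).ge_iff_eq', eq_comm]

theorem essSupCombinationSeminorm_pos_iff (a : EuclideanSpace ℝ ι) :
    0 < essSupCombinationSeminorm ν hg a ↔ 0 < ν {y | ∑ i, a i * g i y ≠ 0} := by
  rw [(apply_nonneg _ a).lt_iff_ne', pos_iff_ne_zero, Ne, Ne,
    essSupCombinationSeminorm_eq_zero_iff, Filter.EventuallyEq, ae_iff]
  rfl

end EssSup

theorem projection_norm_ratio_bounded_below_general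
    {X : Type*} [MeasurableSpace X]
    (μ : Measure (X × ℝ))
    (n : ℕ) (h : Fin n → X → ℝ)
    (hbd : ∀ i x, |h i x| ≤ 1)
    (D : Set (X × ℝ))
    (K : Submodule ℝ (EuclideanSpace ℝ (Fin n)))
    (hK : ∀ lam : EuclideanSpace ℝ (Fin n),
      lam ∈ K ↔ ∀ᵐ z ∂μ, z ∈ D → z.2 * (∑ j, lam j * h j z.1) = 0) :
    ∃ c : ℝ, 0 < c ∧
      ∀ lam : EuclideanSpace ℝ (Fin n),
        0 < μ (D ∩ {z | (∑ j, lam j * h j z.1) ≠ 0}) →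
        ENNReal.ofReal
            (c * ∑ j, |(Submodule.orthogonalProjection Kᗮ lam : EuclideanSpace ℝ (Fin n)) j|)
          < essSup (fun z => ENNReal.ofReal |∑ j, lam j * h j z.1|)
              (μ.restrict D) := by
  have hg (j : Fin n) : eLpNormEssSup (fun z : X × ℝ => h j z.1) (μ.restrict D) ≠ ∞ :=
    ne_top_of_le_ne_top ofReal_ne_top (eLpNormEssSup_le_of_ae_bound (ae_of_all _ fun z => hbd j z.1))
  set p := essSupCombinationSeminorm (μ.restrict D) hg
  have hker : p.ker ≤ K := fun lam hlam => (hK lam).2 <|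
    (ae_imp_of_ae_restrict ((essSupCombinationSeminorm_eq_zero_iff hg lam).1 hlam)).mono
      fun z hz hzD => by simp only [hz hzD, Pi.zero_apply, mul_zero]
  obtain ⟨c, hc, hcp⟩ := p.exists_pos_mul_norm_starProjection_le hker
  refine ⟨c / (2 * (n + 1)), by positivity, fun lam hlam => ?_⟩
  have hp : 0 < p lam := (essSupCombinationSeminorm_pos_iff hg lam).2 <|
    hlam.trans_le (Set.inter_comm D _ ▸ Measure.le_restrict_apply _ _)
  have hessSup : essSup (fun z => ENNReal.ofReal |∑ j, lam j * h j z.1|) (μ.restrict D) =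
      ENNReal.ofReal (p lam) := by
    simp only [p, ofReal_essSupCombinationSeminorm, eLpNormEssSup_eq_essSup_enorm,
      Real.enorm_eq_ofReal_abs]
  set w := Kᗮ.starProjection lam
  have hw_l1 : ∑ j, |w j| ≤ (n + 1) * ‖w‖ := by
    have := EuclideanSpace.sum_abs_le_card_mul_norm w
    rw [Fintype.card_fin] at this
    linarith [norm_nonneg w]
  rw [hessSup, ENNReal.ofReal_lt_ofReal_iff hp]
  calc c / (2 * (n + 1)) * ∑ j, |w j| ≤ c / (2 * (n + 1)) * ((n + 1) * ‖w‖) := by gcongr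
    _ = c * ‖w‖ / 2 := by field_simp
    _ ≤ p lam / 2 := by gcongr; exact hcp lam
    _ < p lam := half_lt_self hp

theorem projection_norm_ratio_bounded_below
    {X : Type*} [MeasurableSpace X]
    (μ : Measure (X × ℝ)) [IsProbabilityMeasure μ]
    (n : ℕ) (h : Fin n → X → ℝ)
    (hmeas : ∀ i, Measurable (h i)) (hbd : ∀ i x, |h i x| ≤ 1)
    (D : Set (X × ℝ)) (hD : MeasurableSet D)
    (K : Submodule ℝ (EuclideanSpace ℝ (Fin n)))
    (hK : ∀ lam : EuclideanSpace ℝ (Fin n),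
      lam ∈ K ↔ ∀ᵐ z ∂μ, z ∈ D → z.2 * (∑ j, lam j * h j z.1) = 0)
    (hex : ∃ lam : EuclideanSpace ℝ (Fin n),
      0 < μ (D ∩ {z | (∑ j, lam j * h j z.1) ≠ 0})) :
    ∃ c : ℝ, 0 < c ∧
      ∀ lam : EuclideanSpace ℝ (Fin n),
        0 < μ (D ∩ {z | (∑ j, lam j * h j z.1) ≠ 0}) →
        ENNReal.ofReal
            (c * ∑ j, |(Submodule.orthogonalProjection Kᗮ lam : EuclideanSpace ℝ (Fin n)) j|)
          < essSup (fun z => ENNReal.ofReal |∑ j, lam j * h j z.1|)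
              (μ.restrict D) :=
  projection_norm_ratio_bounded_below_general μ n h hbd D K hK
end

section
/- There exists a linear classification problem on 𝒳 = [−1,1]² with ℋ the two coordinate projections and μ a probability measure with countable support, such that: (a) some λ̄ ∈ ℝ² satisfies y·⟨λ̄, x⟩ > 0 for every (x,y) in the support of μ; and (b) for every convex loss φ with φ(0) > 0 and φ(z) → 0 as z → −∞, inf_{λ ∈ ℝ²} ∫ φ(−y⟨λ,x⟩) dμ(x,y) = 0. -/
open MeasureTheory

/-- Positive examples: `p_i = (1 - 0.5·4^{2-i}, 1)` for `i ≥ 1`; here indexed by `k = i - 1`. -/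
noncomputable def pPt (k : ℕ) : ℝ × ℝ := (1 - 0.5 * (4 : ℝ) ^ ((1 : ℤ) - k), 1)

/-- Negative examples: `n_i = (1, 1 - 0.3·4^{2-i})` for `i ≥ 1`; here indexed by `k = i - 1`. -/
noncomputable def nPt (k : ℕ) : ℝ × ℝ := (1, 1 - 0.3 * (4 : ℝ) ^ ((1 : ℤ) - k))

/-- The staggered two-line distribution: mass `2^{-i-1}` on `(p_i, +1)` and on `(n_i, -1)`. -/
noncomputable def muImp : Measure ((ℝ × ℝ) × ℝ) :=
  Measure.sum (fun k : ℕ =>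
    ((2 : ENNReal)⁻¹ ^ (k + 2)) •
      (Measure.dirac (pPt k, (1 : ℝ)) + Measure.dirac (nPt k, (-1 : ℝ))))

open Filter in
lemma phi_mono {φ : ℝ → ℝ} (hc : ConvexOn ℝ Set.univ φ)
    (h0 : Tendsto φ atBot (nhds 0)) : Monotone φ := by
  intro a b hab
  rcases eq_or_lt_of_le hab with rfl | hab
  · exact le_rfl
  by_contra h
  push_neg at h
  set s : ℝ := (φ b - φ a) / (b - a) with hs
  have hslt : s < 0 := div_neg_of_neg_of_pos (by linarith) (by linarith)
  -- get z far to the left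
  have h1 : ∀ᶠ z in atBot, φ z < 1 := h0.eventually (eventually_lt_nhds zero_lt_one)
  have h2 : ∀ᶠ z in atBot, z < a - (1 - φ a) / (-s) := eventually_lt_atBot _
  have h3 : ∀ᶠ z in atBot, z < a := eventually_lt_atBot a
  obtain ⟨z, hz1, hz2, hz3⟩ := (h1.and (h2.and h3)).exists
  have hslope := hc.slope_mono_adjacent (Set.mem_univ z) (Set.mem_univ b) hz3 hab
  rw [← hs] at hslope
  -- hslope : (φ a - φ z) / (a - z) ≤ s
  have haz : 0 < a - z := by linarith
  have h4 : φ a - φ z ≤ s * (a - z) := by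
    have := mul_le_mul_of_nonneg_right hslope (le_of_lt haz)
    rwa [div_mul_cancel₀ _ (ne_of_gt haz)] at this
  have h5 : (1 - φ a) / (-s) < a - z := by linarith [hz2]
  have h6 : 1 - φ a < (-s) * (a - z) := by
    have := (div_lt_iff₀ (by linarith : (0:ℝ) < -s)).mp h5
    linarith [this]
  linarith
  
open Filter in
lemma phi_nonneg {φ : ℝ → ℝ} (hm : Monotone φ)
    (h0 : Tendsto φ atBot (nhds 0)) : ∀ x, 0 ≤ φ x := by
  intro x
  refine le_of_tendsto h0 ?_
  exact (eventually_le_atBot x).mono fun z hz => hm hz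

theorem separable_impossibility_setup :
    IsProbabilityMeasure muImp ∧
    (∃ S : Set ((ℝ × ℝ) × ℝ), S.Countable ∧ muImp Sᶜ = 0) ∧
    ∃ lb : ℝ × ℝ,
      (∀ᵐ z ∂muImp, 0 < z.2 * (lb.1 * z.1.1 + lb.2 * z.1.2)) ∧
      ∀ φ : ℝ → ℝ, ConvexOn ℝ Set.univ φ → 0 < φ 0 →
        Filter.Tendsto φ Filter.atBot (nhds 0) →
        (⨅ lam : ℝ × ℝ,
          ∫ z, φ (-(z.2 * (lam.1 * z.1.1 + lam.2 * z.1.2))) ∂muImp) = 0 := by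
  classical
  set S : Set ((ℝ × ℝ) × ℝ) :=
    (Set.range fun k : ℕ => (pPt k, (1:ℝ))) ∪ (Set.range fun k : ℕ => (nPt k, (-1:ℝ))) with hSdef
  have hScount : S.Countable := (Set.countable_range _).union (Set.countable_range _)
  have hSmeas : MeasurableSet Sᶜ := hScount.measurableSet.compl
  have hSnull : muImp Sᶜ = 0 := by
    rw [muImp, Measure.sum_apply _ hSmeas]
    have : ∀ k : ℕ, (((2 : ENNReal)⁻¹ ^ (k + 2)) •
        (Measure.dirac (pPt k, (1 : ℝ)) + Measure.dirac (nPt k, (-1 : ℝ)))) Sᶜ = 0 := by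
      intro k
      have hp : (pPt k, (1:ℝ)) ∈ S := Set.mem_union_left _ ⟨k, rfl⟩
      have hn : (nPt k, (-1:ℝ)) ∈ S := Set.mem_union_right _ ⟨k, rfl⟩
      rw [Measure.smul_apply, Measure.add_apply, Measure.dirac_apply, Measure.dirac_apply]
      rw [Set.indicator_of_notMem (Set.notMem_compl_iff.mpr hp),
        Set.indicator_of_notMem (Set.notMem_compl_iff.mpr hn)]
      simp
    simp only [this, tsum_zero]
  have haeS : ∀ᵐ z ∂muImp, z ∈ S := by
    rw [MeasureTheory.ae_iff]
    exact measure_mono_null (fun z hz => hz) hSnull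
  have hprob : IsProbabilityMeasure muImp := by
    constructor
    rw [muImp, Measure.sum_apply _ MeasurableSet.univ]
    have h1 : ∀ k : ℕ, (((2 : ENNReal)⁻¹ ^ (k + 2)) •
        (Measure.dirac (pPt k, (1 : ℝ)) + Measure.dirac (nPt k, (-1 : ℝ)))) Set.univ
        = (2 : ENNReal)⁻¹ ^ (k + 1) := by
      intro k
      rw [Measure.smul_apply, Measure.add_apply]
      simp only [measure_univ, smul_eq_mul]
      rw [pow_succ, pow_succ]
      have : (1 : ENNReal) + 1 = 2 := by norm_num
      rw [this, mul_assoc]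
      rw [ENNReal.inv_mul_cancel (by norm_num) (by norm_num), mul_one]
    simp only [h1]
    rw [show (fun k : ℕ => (2 : ENNReal)⁻¹ ^ (k + 1)) = fun k : ℕ => (2 : ENNReal)⁻¹ ^ k * 2⁻¹
        from funext fun k => by rw [pow_succ]]
    rw [ENNReal.tsum_mul_right, ENNReal.tsum_geometric, ENNReal.one_sub_inv_two, inv_inv]
    exact ENNReal.mul_inv_cancel (by norm_num) (by norm_num)
  haveI := hprob
  refine ⟨hprob, ⟨S, hScount, hSnull⟩, ((-1 : ℝ), (1 : ℝ)), ?_, ?_⟩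
  · -- a.e. separation
    filter_upwards [haeS] with z hz
    rcases hz with ⟨k, rfl⟩ | ⟨k, rfl⟩
    · have h4 : (0:ℝ) < (4 : ℝ) ^ ((1 : ℤ) - k) := zpow_pos (by norm_num) _
      simp only [pPt]
      nlinarith
    · have h4 : (0:ℝ) < (4 : ℝ) ^ ((1 : ℤ) - k) := zpow_pos (by norm_num) _
      simp only [nPt]
      nlinarith
  · intro φ hconv hφ0 htend
    have hmono : Monotone φ := phi_mono hconv htend
    have hnn : ∀ x, 0 ≤ φ x := phi_nonneg hmono htend
    set f : ℝ × ℝ → ℝ := fun lam =>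
      ∫ z, φ (-(z.2 * (lam.1 * z.1.1 + lam.2 * z.1.2))) ∂muImp with hf
    have hbdd : BddBelow (Set.range f) := by
      refine ⟨0, ?_⟩
      rintro v ⟨lam, rfl⟩
      exact integral_nonneg fun z => hnn _
    have hge : (0:ℝ) ≤ ⨅ lam, f lam :=
      le_ciInf fun lam => integral_nonneg fun z => hnn _
    have key : Filter.Tendsto (fun n : ℕ => f ((-(n:ℝ)), (n:ℝ)))
        Filter.atTop (nhds 0) := by
      have := MeasureTheory.tendsto_integral_of_dominated_convergence
        (μ := muImp)
        (F := fun n : ℕ => fun z : (ℝ × ℝ) × ℝ =>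
          φ (-(z.2 * ((-(n:ℝ)) * z.1.1 + (n:ℝ) * z.1.2))))
        (f := fun _ => (0:ℝ)) (bound := fun _ => φ 0)
        (fun n => by
          have hφmeas : Measurable φ := hmono.measurable
          exact (hφmeas.comp (by fun_prop)).aestronglyMeasurable)
        (integrable_const _)
        (fun n => by
          filter_upwards [haeS] with z hz
          have harg : -(z.2 * ((-(n:ℝ)) * z.1.1 + (n:ℝ) * z.1.2)) ≤ 0 := by
            rcases hz with ⟨k, rfl⟩ | ⟨k, rfl⟩
            · have h4 : (0:ℝ) < (4 : ℝ) ^ ((1 : ℤ) - k) := zpow_pos (by norm_num) _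
              simp only [pPt]
              nlinarith [Nat.cast_nonneg (α := ℝ) n]
            · have h4 : (0:ℝ) < (4 : ℝ) ^ ((1 : ℤ) - k) := zpow_pos (by norm_num) _
              simp only [nPt]
              nlinarith [Nat.cast_nonneg (α := ℝ) n]
          rw [Real.norm_eq_abs, abs_of_nonneg (hnn _)]
          exact hmono harg)
        (by
          filter_upwards [haeS] with z hz
          have : ∀ c : ℝ, 0 < c → Filter.Tendsto
              (fun n : ℕ => φ (-((n:ℝ) * c))) Filter.atTop (nhds 0) := by
            intro c hc
            refine htend.comp ?_
            exact Filter.tendsto_neg_atTop_atBot.comp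
              (Filter.Tendsto.atTop_mul_const hc tendsto_natCast_atTop_atTop)
          rcases hz with ⟨k, rfl⟩ | ⟨k, rfl⟩
          · have h4 : (0:ℝ) < (4 : ℝ) ^ ((1 : ℤ) - k) := zpow_pos (by norm_num) _
            have heq : ∀ n : ℕ,
                -((pPt k, (1:ℝ)).2 * ((-(n:ℝ)) * (pPt k, (1:ℝ)).1.1 + (n:ℝ) * (pPt k, (1:ℝ)).1.2))
                = -((n:ℝ) * (0.5 * (4 : ℝ) ^ ((1 : ℤ) - k))) := by
              intro n; simp only [pPt]; ring
            simp only [heq]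
            exact this _ (by positivity)
          · have h4 : (0:ℝ) < (4 : ℝ) ^ ((1 : ℤ) - k) := zpow_pos (by norm_num) _
            have heq : ∀ n : ℕ,
                -((nPt k, (-1:ℝ)).2 * ((-(n:ℝ)) * (nPt k, (-1:ℝ)).1.1 + (n:ℝ) * (nPt k, (-1:ℝ)).1.2))
                = -((n:ℝ) * (0.3 * (4 : ℝ) ^ ((1 : ℤ) - k))) := by
              intro n; simp only [nPt]; ring
            simp only [heq]
            exact this _ (by positivity))
      simpa [hf] using this
    have hle : (⨅ lam, f lam) ≤ 0 := by
      refine ge_of_tendsto key ?_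
      exact Filter.Eventually.of_forall fun n => ciInf_le hbdd _
    exact le_antisymm hle hge
end

section
/- In the linear classification problem of the previous statement, for any convex loss φ ∈ Φ and any bound b > 0, and for any finite sample containing at least one positive and one negative example, every maximum-margin unit-ℓ¹-norm direction λ (maximizing min_i y_i⟨λ, x_i⟩ over ‖λ‖₁ = 1) admits a scaling λ̂ = cλ with c > 0 such that ∫ φ(−y⟨λ̂, x⟩) dμ(x,y) ≥ b. -/
/-!
A convex loss `φ` with `φ 0 > 0` and `φ → 0` at `-∞` is nonnegative, nondecreasing, and tends to
`+∞` at `+∞`. It therefore suffices that the max-margin direction `λ` misclassifies some atom `z₀`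
of `μ`: as `c → ∞`, the loss of `cλ` at `z₀` alone, weighted by `μ {z₀} > 0`, exceeds `b`.

Write `gₖ = 4 ^ (1 - k)`, so that the margins of `λ` at `pₖ` and `nₖ` are
`λ₁ + λ₂ - gₖ λ₁ / 2` and `-(λ₁ + λ₂) + 3 gₖ λ₂ / 10`. If `λ₁ + λ₂ ≠ 0`, one of these tends to a
negative limit, so a far atom is misclassified. If `λ₁ + λ₂ = 0`, then `λ = ±(-1/2, 1/2)`, and the
sample margin of `λ` is at most `min (u / 4) (3 w / 20)`, where `u` and `w` are the smallest gaps
of positive and negative points in the sample. The unit direction equalising the margins at those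
two extreme points does strictly better unless `5 u = 3 w`, which is impossible for powers of `4`.
-/

open MeasureTheory

/-- The (sample) margin of a direction `lam` on a finite sample `s`. -/
noncomputable def sampleMargin (s : Finset ((ℝ × ℝ) × ℝ)) (lam : ℝ × ℝ) : ℝ :=
  sInf ((fun z : (ℝ × ℝ) × ℝ => z.2 * (lam.1 * z.1.1 + lam.2 * z.1.2)) '' ↑s)

open Filter Topology Set
open scoped ENNReal

lemma ConvexOn.tendsto_atTop_of_lt {φ : ℝ → ℝ} (hφ : ConvexOn ℝ Set.univ φ) {x y : ℝ}
    (hxy : x < y) (hφxy : φ x < φ y) : Tendsto φ atTop atTop := by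
  set d := (φ y - φ x) / (y - x)
  have hd : 0 < d := div_pos (sub_pos.2 hφxy) (sub_pos.2 hxy)
  have hline : Tendsto (fun t => φ y + (t - y) * d) atTop atTop :=
    tendsto_atTop_add_const_left _ _
      ((tendsto_atTop_add_const_right _ _ tendsto_id).atTop_mul_const hd)
  refine tendsto_atTop_mono' _ ?_ hline
  filter_upwards [eventually_gt_atTop y] with t ht
  have hsec := hφ.secant_mono_aux1 (mem_univ x) (mem_univ t) hxy ht
  have : d * (y - x) = φ y - φ x := div_mul_cancel₀ _ (sub_pos.2 hxy).ne'
  nlinarith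

lemma ConvexOn.monotone_of_tendsto_atBot {φ : ℝ → ℝ} (hφ : ConvexOn ℝ Set.univ φ) {l : ℝ}
    (hlim : Tendsto φ atBot (𝓝 l)) : Monotone φ := by
  intro x y hxy
  rcases hxy.eq_or_lt with rfl | hxy
  · exact le_rfl
  by_contra! hφxy
  set d := (φ x - φ y) / (y - x)
  have hd : 0 < d := div_pos (sub_pos.2 hφxy) (sub_pos.2 hxy)
  have hline : Tendsto (fun z => φ x + (x - z) * d) atBot atTop :=
    tendsto_atTop_add_const_left _ _
      ((tendsto_atTop_add_const_left _ _ tendsto_neg_atBot_atTop).atTop_mul_const hd)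
  refine not_tendsto_nhds_of_tendsto_atTop (tendsto_atTop_mono' _ ?_ hline) l hlim
  filter_upwards [eventually_lt_atBot x] with z hz
  have hsec := hφ.secant_mono_aux1 (mem_univ z) (mem_univ y) hz hxy
  have : d * (y - x) = φ x - φ y := div_mul_cancel₀ _ (sub_pos.2 hxy).ne'
  nlinarith

lemma ConvexOn.tendsto_atTop_of_tendsto_atBot {φ : ℝ → ℝ} (hφ : ConvexOn ℝ Set.univ φ)
    {l x : ℝ} (hlim : Tendsto φ atBot (𝓝 l)) (hx : l < φ x) : Tendsto φ atTop atTop := by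
  obtain ⟨z, hz, hzx⟩ := ((hlim.eventually (gt_mem_nhds hx)).and (eventually_lt_atBot x)).exists
  exact hφ.tendsto_atTop_of_lt hzx hz

lemma measureReal_singleton_mul_le_integral {α : Type*} [MeasurableSpace α]
    [MeasurableSingletonClass α] {μ : Measure α} {f : α → ℝ} (hf : 0 ≤ f) (hfi : Integrable f μ)
    (a : α) : μ.real {a} * f a ≤ ∫ x, f x ∂μ := by
  rw [← smul_eq_mul, ← integral_singleton]
  exact setIntegral_le_integral hfi (Eventually.of_forall hf)

lemma Finset.exists_max_of_injective {α : Type*} (s : Finset α) {f : ℕ → α}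
    (hf : Function.Injective f) (h : ∃ k, f k ∈ s) : ∃ K, f K ∈ s ∧ ∀ k, f k ∈ s → k ≤ K :=
  Set.exists_max_image {k | f k ∈ s} id (s.finite_toSet.preimage hf.injOn) h

noncomputable def gap (k : ℕ) : ℝ := (4 : ℝ) ^ ((1 : ℤ) - k)

lemma gap_pos (k : ℕ) : 0 < gap k := zpow_pos (by norm_num) _

lemma gap_le_four (k : ℕ) : gap k ≤ 4 := by
  simpa [gap] using
    zpow_le_zpow_right₀ (show (1 : ℝ) ≤ 4 by norm_num) (show (1 : ℤ) - k ≤ 1 by omega)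

lemma gap_strictAnti : StrictAnti gap := fun _ _ h =>
  zpow_lt_zpow_right₀ (by norm_num : (1 : ℝ) < 4) (by omega)

lemma tendsto_gap_atTop : Tendsto gap atTop (𝓝 0) := by
  have h : gap = fun k : ℕ => 4 * (4⁻¹ : ℝ) ^ k := by
    ext k; simp [gap, zpow_sub₀, inv_pow, div_eq_mul_inv]
  rw [h, ← mul_zero 4]
  exact (tendsto_pow_atTop_nhds_zero_of_lt_one (by norm_num) (by norm_num)).const_mul 4

lemma five_mul_gap_ne_three_mul_gap (K J : ℕ) : 5 * gap K ≠ 3 * gap J := by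
  intro h
  have h4 (k : ℕ) : gap k = 4 / 4 ^ k := by
    rw [gap, zpow_sub₀ (by norm_num), zpow_one, zpow_natCast]
  rw [h4, h4] at h
  field_simp at h
  have hnat : 5 * 4 ^ J = 4 ^ K * 3 := by exact_mod_cast h
  have hmod : 4 ^ J % 3 = 1 := by rw [Nat.pow_mod]; simp
  omega

lemma pPt_eq (k : ℕ) : pPt k = (1 - 0.5 * gap k, 1) := rfl

lemma nPt_eq (k : ℕ) : nPt k = (1, 1 - 0.3 * gap k) := rfl

def IsMuImpAtom (z : (ℝ × ℝ) × ℝ) : Prop := (∃ k, z = (pPt k, 1)) ∨ ∃ k, z = (nPt k, -1)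

lemma IsMuImpAtom.mem_Icc {z : (ℝ × ℝ) × ℝ} (hz : IsMuImpAtom z) : z ∈ Icc (-1) 1 := by
  rcases hz with ⟨k, rfl⟩ | ⟨k, rfl⟩
  all_goals
    refine ⟨⟨⟨?_, ?_⟩, ?_⟩, ⟨?_, ?_⟩, ?_⟩
    all_goals simp [pPt_eq, nPt_eq]
  all_goals linarith [gap_pos k, gap_le_four k]

instance : IsProbabilityMeasure muImp := by
  constructor
  rw [muImp, Measure.sum_apply _ MeasurableSet.univ]
  simp only [Measure.smul_apply, Measure.add_apply, measure_univ, smul_eq_mul,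
    one_add_one_eq_two]
  have h (i : ℕ) : (2⁻¹ : ℝ≥0∞) ^ (i + 2) * 2 = 2⁻¹ ^ (i + 1) := by
    rw [pow_succ _ (i + 1), mul_assoc, ENNReal.inv_mul_cancel two_ne_zero ENNReal.ofNat_ne_top,
      mul_one]
  simp_rw [h, ENNReal.tsum_geometric_add_one, ENNReal.one_sub_inv_two, inv_inv]
  exact ENNReal.inv_mul_cancel two_ne_zero ENNReal.ofNat_ne_top

lemma ae_isMuImpAtom : ∀ᵐ z ∂muImp, IsMuImpAtom z := by
  rw [muImp, Measure.ae_sum_iff]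
  refine fun k => Measure.ae_smul_measure (ae_add_measure_iff.2 ⟨?_, ?_⟩) _ <;>
    rw [ae_dirac_eq] <;> exact eventually_pure.2 (by simp [IsMuImpAtom])

lemma muImp_singleton_pos {z : (ℝ × ℝ) × ℝ} (hz : IsMuImpAtom z) : 0 < muImp {z} := by
  obtain ⟨k, rfl⟩ | ⟨k, rfl⟩ := hz <;>
  refine lt_of_lt_of_le ?_ (Measure.le_iff'.1 (Measure.le_sum _ k) _) <;>
  simp only [Measure.smul_apply, Measure.add_apply, smul_eq_mul,
    Measure.dirac_apply_of_mem (mem_singleton _)] <;>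
  exact ENNReal.mul_pos (pow_ne_zero _ (by simp)) (by simp)

lemma integrable_muImp_of_continuous {f : (ℝ × ℝ) × ℝ → ℝ} (hf : Continuous f) :
    Integrable f muImp := by
  obtain ⟨C, hC⟩ := isCompact_Icc.exists_bound_of_continuousOn
    (s := Icc (-1 : (ℝ × ℝ) × ℝ) 1) hf.continuousOn
  exact .of_bound hf.aestronglyMeasurable C
    (ae_isMuImpAtom.mono fun z hz => hC z hz.mem_Icc)

def margin (lam : ℝ × ℝ) (z : (ℝ × ℝ) × ℝ) : ℝ := z.2 * (lam.1 * z.1.1 + lam.2 * z.1.2)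

lemma margin_pPt (lam : ℝ × ℝ) (k : ℕ) :
    margin lam (pPt k, 1) = lam.1 + lam.2 - 0.5 * lam.1 * gap k := by
  simp only [margin, pPt_eq]; ring

lemma margin_nPt (lam : ℝ × ℝ) (k : ℕ) :
    margin lam (nPt k, -1) = -(lam.1 + lam.2) + 0.3 * lam.2 * gap k := by
  simp only [margin, nPt_eq]; ring

lemma exists_muImpAtom_margin_neg_of_add_ne_zero {lam : ℝ × ℝ} (h : lam.1 + lam.2 ≠ 0) :
    ∃ z, IsMuImpAtom z ∧ margin lam z < 0 := by
  have hp : Tendsto (fun k => margin lam (pPt k, 1)) atTop (𝓝 (lam.1 + lam.2)) := by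
    simp_rw [margin_pPt]
    simpa using tendsto_const_nhds.sub (tendsto_gap_atTop.const_mul (0.5 * lam.1))
  have hn : Tendsto (fun k => margin lam (nPt k, -1)) atTop (𝓝 (-(lam.1 + lam.2))) := by
    simp_rw [margin_nPt]
    simpa using tendsto_const_nhds.add (tendsto_gap_atTop.const_mul (0.3 * lam.2))
  rcases h.lt_or_gt with h | h
  · obtain ⟨k, hk⟩ := (hp.eventually_lt_const h).exists
    exact ⟨_, .inl ⟨k, rfl⟩, hk⟩
  · obtain ⟨k, hk⟩ := (hn.eventually_lt_const (neg_lt_zero.2 h)).exists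
    exact ⟨_, .inr ⟨k, rfl⟩, hk⟩

lemma sampleMargin_le_margin {s : Finset ((ℝ × ℝ) × ℝ)} {z : (ℝ × ℝ) × ℝ} (hz : z ∈ s)
    (lam : ℝ × ℝ) : sampleMargin s lam ≤ margin lam z :=
  csInf_le ((s.finite_toSet.image _).bddBelow) (mem_image_of_mem _ hz)

lemma le_sampleMargin {s : Finset ((ℝ × ℝ) × ℝ)} (hs : s.Nonempty) {lam : ℝ × ℝ} {r : ℝ}
    (h : ∀ z ∈ s, r ≤ margin lam z) : r ≤ sampleMargin s lam :=
  le_csInf ((Finset.coe_nonempty.2 hs).image _) (by rintro _ ⟨z, hz, rfl⟩; exact h z hz)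

-- The unit direction `(a, 1 + a)`, `a < 0`, whose margins at `(pPt K, 1)` and `(nPt J, -1)` agree
-- when `u = gap K` and `w = gap J`; their common value is `balancedMargin u w`.
noncomputable def balancedDir (u w : ℝ) : ℝ × ℝ :=
  (-(2 - 0.3 * w) / (4 - 0.5 * u - 0.3 * w), (2 - 0.5 * u) / (4 - 0.5 * u - 0.3 * w))

noncomputable def balancedMargin (u w : ℝ) : ℝ :=
  (0.5 * u + 0.3 * w - 0.15 * u * w) / (4 - 0.5 * u - 0.3 * w)

lemma balancedDir_norm {u w : ℝ} (hu : u ≤ 4) (hw : w ≤ 4) :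
    |(balancedDir u w).1| + |(balancedDir u w).2| = 1 := by
  have hD : 0 < 4 - 0.5 * u - 0.3 * w := by linarith
  rw [balancedDir, abs_div, abs_div, abs_of_pos hD, abs_neg, abs_of_pos (by linarith),
    abs_of_nonneg (by linarith), ← add_div, div_eq_one_iff_eq hD.ne']
  ring

lemma balancedMargin_pos {u w : ℝ} (hu0 : 0 < u) (hu4 : u ≤ 4) (hw0 : 0 < w) (hw4 : w ≤ 4) :
    0 < balancedMargin u w :=
  div_pos (by nlinarith) (by linarith)

lemma min_lt_balancedMargin {u w : ℝ} (hu4 : u ≤ 4) (hw4 : w ≤ 4)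
    (huw : 5 * u ≠ 3 * w) : min (0.25 * u) (0.15 * w) < balancedMargin u w := by
  have hD : 0 < 4 - 0.5 * u - 0.3 * w := by linarith
  rcases huw.lt_or_gt with huw | huw
  · refine min_lt_of_left_lt ((lt_div_iff₀ hD).2 ?_)
    nlinarith
  · refine min_lt_of_right_lt ((lt_div_iff₀ hD).2 ?_)
    nlinarith

lemma balancedMargin_le_margin_pPt {u w : ℝ} (hu : u ≤ 4) (hw : w ≤ 4) {k : ℕ}
    (huk : u ≤ gap k) :
    balancedMargin u w ≤ margin (balancedDir u w) (pPt k, 1) := by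
  have key : margin (balancedDir u w) (pPt k, 1) - balancedMargin u w
      = 0.5 * (2 - 0.3 * w) * (gap k - u) / (4 - 0.5 * u - 0.3 * w) := by
    simp only [margin_pPt, balancedDir, balancedMargin]
    field_simp
    ring
  exact sub_nonneg.1 (key ▸ div_nonneg (by nlinarith) (by linarith))

lemma balancedMargin_le_margin_nPt {u w : ℝ} (hu : u ≤ 4) (hw : w ≤ 4) {k : ℕ}
    (hwk : w ≤ gap k) :
    balancedMargin u w ≤ margin (balancedDir u w) (nPt k, -1) := by
  have key : margin (balancedDir u w) (nPt k, -1) - balancedMargin u w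
      = 0.3 * (2 - 0.5 * u) * (gap k - w) / (4 - 0.5 * u - 0.3 * w) := by
    simp only [margin_nPt, balancedDir, balancedMargin]
    field_simp
    ring
  exact sub_nonneg.1 (key ▸ div_nonneg (by nlinarith) (by linarith))

lemma balancedMargin_le_sampleMargin {s : Finset ((ℝ × ℝ) × ℝ)}
    (hs : ∀ z ∈ s, IsMuImpAtom z) {K J : ℕ} (hK : (pPt K, 1) ∈ s)
    (hKmax : ∀ k, (pPt k, 1) ∈ s → k ≤ K) (hJmax : ∀ k, (nPt k, -1) ∈ s → k ≤ J) :
    balancedMargin (gap K) (gap J) ≤ sampleMargin s (balancedDir (gap K) (gap J)) := by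
  refine le_sampleMargin ⟨_, hK⟩ fun z hz => ?_
  obtain ⟨k, rfl⟩ | ⟨k, rfl⟩ := hs z hz
  · exact balancedMargin_le_margin_pPt (gap_le_four K) (gap_le_four J)
      (gap_strictAnti.antitone (hKmax k hz))
  · exact balancedMargin_le_margin_nPt (gap_le_four K) (gap_le_four J)
      (gap_strictAnti.antitone (hJmax k hz))

lemma add_ne_zero_of_isMaxMargin {s : Finset ((ℝ × ℝ) × ℝ)}
    (hs : ∀ z ∈ s, IsMuImpAtom z) (hpos : ∃ z ∈ s, z.2 = 1) (hneg : ∃ z ∈ s, z.2 = -1)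
    {lam : ℝ × ℝ} (hnorm : |lam.1| + |lam.2| = 1)
    (hmax : ∀ lam' : ℝ × ℝ, |lam'.1| + |lam'.2| = 1 →
      sampleMargin s lam' ≤ sampleMargin s lam) :
    lam.1 + lam.2 ≠ 0 := by
  intro hsum
  have hpos' : ∃ k, (pPt k, (1 : ℝ)) ∈ s := by
    obtain ⟨z, hz, hz2⟩ := hpos
    obtain ⟨k, rfl⟩ | ⟨k, rfl⟩ := hs z hz
    · exact ⟨k, hz⟩
    · norm_num at hz2
  have hneg' : ∃ k, (nPt k, (-1 : ℝ)) ∈ s := by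
    obtain ⟨z, hz, hz2⟩ := hneg
    obtain ⟨k, rfl⟩ | ⟨k, rfl⟩ := hs z hz
    · norm_num at hz2
    · exact ⟨k, hz⟩
  obtain ⟨K, hK, hKmax⟩ := s.exists_max_of_injective
    (fun j k h => gap_strictAnti.injective (by norm_num [pPt_eq] at h; exact h)) hpos'
  obtain ⟨J, hJ, hJmax⟩ := s.exists_max_of_injective
    (fun j k h => gap_strictAnti.injective (by norm_num [nPt_eq] at h; exact h)) hneg'
  have hbal : balancedMargin (gap K) (gap J) ≤ sampleMargin s lam :=
    (balancedMargin_le_sampleMargin hs hK hKmax hJmax).trans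
      (hmax _ (balancedDir_norm (gap_le_four K) (gap_le_four J)))
  have hp := (sampleMargin_le_margin hK lam).trans_eq (margin_pPt lam K)
  have hn := (sampleMargin_le_margin hJ lam).trans_eq (margin_nPt lam J)
  have hmin := min_lt_balancedMargin (gap_le_four K) (gap_le_four J)
    (five_mul_gap_ne_three_mul_gap K J)
  have hv : lam.2 = -lam.1 := by linarith
  rw [hv, abs_neg] at hnorm
  rw [hsum] at hp hn
  rw [hv] at hn
  rcases (abs_eq (by norm_num : (0 : ℝ) ≤ 1 / 2)).1 (by linarith : |lam.1| = 1 / 2) with h | h <;>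
    rw [h] at hp hn
  · linarith [gap_pos K,
      balancedMargin_pos (gap_pos K) (gap_le_four K) (gap_pos J) (gap_le_four J)]
  · exact (hmin.trans_le hbal).not_ge (le_min (by linarith) (by linarith))

theorem max_margin_unbounded_risk_general
    (φ : ℝ → ℝ) (hconv : ConvexOn ℝ Set.univ φ) (h0 : 0 < φ 0)
    (hlim : Filter.Tendsto φ Filter.atBot (nhds 0))
    (b : ℝ)
    (s : Finset ((ℝ × ℝ) × ℝ))
    (hs : ∀ z ∈ s, (∃ k, z = (pPt k, (1 : ℝ))) ∨ (∃ k, z = (nPt k, (-1 : ℝ))))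
    (hpos : ∃ z ∈ s, z.2 = 1) (hneg : ∃ z ∈ s, z.2 = -1)
    (lam : ℝ × ℝ) (hnorm : |lam.1| + |lam.2| = 1)
    (hmax : ∀ lam' : ℝ × ℝ, |lam'.1| + |lam'.2| = 1 →
      sampleMargin s lam' ≤ sampleMargin s lam) :
    ∃ c : ℝ, 0 < c ∧
      b ≤ ∫ z, φ (-(z.2 * ((c * lam.1) * z.1.1 + (c * lam.2) * z.1.2))) ∂muImp := by
  obtain ⟨z₀, hz₀, hm⟩ := exists_muImpAtom_margin_neg_of_add_ne_zero
    (add_ne_zero_of_isMaxMargin hs hpos hneg hnorm hmax)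
  have hφ_nonneg : 0 ≤ φ := (hconv.monotone_of_tendsto_atBot hlim).le_of_tendsto hlim
  have hφ_cont : Continuous φ := continuousOn_univ.1 (hconv.continuousOn isOpen_univ)
  have hw : 0 < muImp.real {z₀} :=
    ENNReal.toReal_pos (muImp_singleton_pos hz₀).ne' (measure_ne_top _ _)
  obtain ⟨c, hφc, hc⟩ := (((hconv.tendsto_atTop_of_tendsto_atBot hlim h0).comp
    (tendsto_id.atTop_mul_const (neg_pos.2 hm))).eventually_ge_atTop (b / muImp.real {z₀})
    |>.and (eventually_gt_atTop 0)).exists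
  have hrisk (z : (ℝ × ℝ) × ℝ) :
      -(z.2 * ((c * lam.1) * z.1.1 + (c * lam.2) * z.1.2)) = c * -margin lam z := by
    simp only [margin]; ring
  refine ⟨c, hc, ?_⟩
  simp only [hrisk]
  calc b ≤ muImp.real {z₀} * φ (c * -margin lam z₀) := (div_le_iff₀' hw).1 hφc
    _ ≤ _ := measureReal_singleton_mul_le_integral (f := fun z => φ (c * -margin lam z))
      (fun z => hφ_nonneg _)
      (integrable_muImp_of_continuous (hφ_cont.comp (by simp only [margin]; fun_prop))) z₀

theorem max_margin_unbounded_risk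
    (φ : ℝ → ℝ) (hconv : ConvexOn ℝ Set.univ φ) (h0 : 0 < φ 0)
    (hlim : Filter.Tendsto φ Filter.atBot (nhds 0))
    (b : ℝ) (hb : 0 < b)
    (s : Finset ((ℝ × ℝ) × ℝ))
    (hs : ∀ z ∈ s, (∃ k, z = (pPt k, (1 : ℝ))) ∨ (∃ k, z = (nPt k, (-1 : ℝ))))
    (hpos : ∃ z ∈ s, z.2 = 1) (hneg : ∃ z ∈ s, z.2 = -1)
    (lam : ℝ × ℝ) (hnorm : |lam.1| + |lam.2| = 1)
    (hmax : ∀ lam' : ℝ × ℝ, |lam'.1| + |lam'.2| = 1 →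
      sampleMargin s lam' ≤ sampleMargin s lam) :
    ∃ c : ℝ, 0 < c ∧
      b ≤ ∫ z, φ (-(z.2 * ((c * lam.1) * z.1.1 + (c * lam.2) * z.1.2))) ∂muImp :=
  max_margin_unbounded_risk_general φ hconv h0 hlim b s hs hpos hneg lam hnorm hmax
end

section
/- Let 𝒮_𝒫(ℋ,μ) denote the collection of measurable sets C for which there exists a sequence {λ_i} ⊂ ℝⁿ with y(Hλ_i)(x) = 0 for every (x,y) ∈ C and y(Hλ_i)(x) ↑ ∞ for μ-a.e. (x,y) ∈ C^c. Then 𝒮_𝒫(ℋ,μ) is closed under finite intersections. -/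
open MeasureTheory Filter

/-- `C` is in the primal collection `𝒮_𝒫(ℋ,μ)`: there is a sequence of weightings
with zero margins everywhere on `C` and margins increasing to `∞` μ-a.e. on `Cᶜ`. -/
def PrimalSet {X : Type*} [MeasurableSpace X]
    (μ : Measure (X × ℝ)) (n : ℕ) (h : Fin n → X → ℝ) (C : Set (X × ℝ)) : Prop :=
  ∃ lam : ℕ → Fin n → ℝ,
    (∀ i, ∀ z ∈ C, z.2 * (∑ j, lam i j * h j z.1) = 0) ∧
    (∀ᵐ z ∂μ, z ∈ Cᶜ →
      Monotone (fun i => z.2 * (∑ j, lam i j * h j z.1)) ∧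
      Tendsto (fun i => z.2 * (∑ j, lam i j * h j z.1)) atTop atTop)

theorem primal_sets_closed_under_finite_intersections
    {X : Type*} [MeasurableSpace X]
    (μ : Measure (X × ℝ)) [IsProbabilityMeasure μ]
    (n : ℕ) (h : Fin n → X → ℝ)
    (hmeas : ∀ i, Measurable (h i)) (hbd : ∀ i x, |h i x| ≤ 1)
    (p : ℕ) (C : Fin p → Set (X × ℝ))
    (hC : ∀ j, PrimalSet μ n h (C j)) :
    PrimalSet μ n h (⋂ j, C j) := by
  choose lam hzero hae using hC
  refine ⟨fun i k => ∑ j, lam j i k, ?_, ?_⟩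
  · intro i z hz
    have hsplit : z.2 * (∑ k, (∑ j, lam j i k) * h k z.1)
        = ∑ j, z.2 * (∑ k, lam j i k * h k z.1) := by
      simp only [Finset.mul_sum, Finset.sum_mul]
      rw [Finset.sum_comm]
    rw [hsplit]
    apply Finset.sum_eq_zero
    intro j _
    exact hzero j i z (Set.mem_iInter.mp hz j)
  · have hall : ∀ᵐ z ∂μ, ∀ j, z ∈ (C j)ᶜ →
        Monotone (fun i => z.2 * (∑ k, lam j i k * h k z.1)) ∧
        Tendsto (fun i => z.2 * (∑ k, lam j i k * h k z.1)) atTop atTop :=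
      (ae_all_iff).mpr hae
    filter_upwards [hall] with z hz hzc
    set f : Fin p → ℕ → ℝ := fun j i => z.2 * (∑ k, lam j i k * h k z.1) with hf
    have hsplit : ∀ i, z.2 * (∑ k, (∑ j, lam j i k) * h k z.1) = ∑ j, f j i := by
      intro i
      simp only [hf, Finset.mul_sum, Finset.sum_mul]
      rw [Finset.sum_comm]
    obtain ⟨j₀, hj₀⟩ : ∃ j, z ∉ C j := by
      by_contra hcon
      push_neg at hcon
      exact hzc (Set.mem_iInter.mpr hcon)
    have hmono : ∀ j, Monotone (f j) := by
      intro j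
      by_cases hcj : z ∈ C j
      · have : ∀ i, f j i = 0 := fun i => hzero j i z hcj
        intro a b _; rw [this a, this b]
      · exact (hz j hcj).1
    constructor
    · intro a b hab
      simp only [hsplit]
      exact Finset.sum_le_sum fun j _ => hmono j hab
    · have key : ∀ i, f j₀ i + ∑ j ∈ Finset.univ.erase j₀, f j 0 ≤ ∑ j, f j i := by
        intro i
        rw [← Finset.add_sum_erase _ _ (Finset.mem_univ j₀)]
        exact add_le_add le_rfl (Finset.sum_le_sum fun j _ => hmono j (Nat.zero_le i))
      have htend : Tendsto (fun i => f j₀ i + ∑ j ∈ Finset.univ.erase j₀, f j 0)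
          atTop atTop := (hz j₀ hj₀).2.atTop_add tendsto_const_nhds
      have := tendsto_atTop_mono key htend
      simpa only [hsplit] using this
end

section
/- Let φ₁(x) = ln(1+eˣ) (logistic loss), φ₂(x) = eˣ (exponential loss), and c₁, c₂ > 0, c > 0. Then for every x ≤ ln(c): (c₁φ₁(x) + c₂φ₂(x)) / (c₁φ₁′(x) + c₂φ₂′(x)) ≤ (c₁ + c₂)/(c₁/(1+c) + c₂), and (c₁φ₁″(x) + c₂φ₂″(x)) / (c₁φ₁(x) + c₂φ₂(x)) ≤ (c₁ + c₂)/(c₁·ln(1+c)/c + c₂). -/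
open Real

lemma secant_log_bound (c e : ℝ) (hc : 0 < c) (he : 0 < e) (hec : e ≤ c) :
    Real.log (1 + c) / c * e ≤ Real.log (1 + e) := by
  have hcon := (strictConcaveOn_log_Ioi.concaveOn).2
    (Set.mem_Ioi.2 (by norm_num : (0:ℝ) < 1))
    (Set.mem_Ioi.2 (by linarith : (0:ℝ) < 1 + c))
    (show (0:ℝ) ≤ 1 - e / c by
      have : e / c ≤ 1 := (div_le_one hc).2 hec
      linarith)
    (show (0:ℝ) ≤ e / c by positivity)
    (show (1 - e / c) + e / c = 1 by ring)
  simp only [smul_eq_mul, Real.log_one, mul_one] at hcon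
  have hcomb : 1 - e / c + e / c * (1 + c) = 1 + e := by
    field_simp; ring
  rw [hcomb] at hcon
  calc Real.log (1 + c) / c * e = e / c * Real.log (1 + c) := by ring
    _ ≤ Real.log (1 + e) := by linarith

theorem logistic_exp_cone_bounds
    (c₁ c₂ c : ℝ) (hc₁ : 0 < c₁) (hc₂ : 0 < c₂) (hc : 0 < c)
    (x : ℝ) (hx : x ≤ Real.log c) :
    (c₁ * Real.log (1 + Real.exp x) + c₂ * Real.exp x)
        / (c₁ * (Real.exp x / (1 + Real.exp x)) + c₂ * Real.exp x)
      ≤ (c₁ + c₂) / (c₁ / (1 + c) + c₂) ∧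
    (c₁ * (Real.exp x / (1 + Real.exp x) ^ 2) + c₂ * Real.exp x)
        / (c₁ * Real.log (1 + Real.exp x) + c₂ * Real.exp x)
      ≤ (c₁ + c₂) / (c₁ * Real.log (1 + c) / c + c₂) := by
  set E := Real.exp x with hEdef
  have hE : 0 < E := Real.exp_pos x
  have hEc : E ≤ c := by
    calc E ≤ Real.exp (Real.log c) := Real.exp_le_exp.2 hx
      _ = c := Real.exp_log hc
  have hlogle : Real.log (1 + E) ≤ E := by
    have := Real.log_le_sub_one_of_pos (show 0 < 1 + E by linarith)
    linarith
  have hlogpos : 0 < Real.log (1 + E) := Real.log_pos (by linarith)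
  have hlogcpos : 0 < Real.log (1 + c) := Real.log_pos (by linarith)
  constructor
  · -- first bound
    have hN : c₁ * Real.log (1 + E) + c₂ * E ≤ (c₁ + c₂) * E := by nlinarith
    have hdiv : E / (1 + c) ≤ E / (1 + E) :=
      div_le_div_of_nonneg_left hE.le (by linarith) (by linarith)
    have hD : (c₁ / (1 + c) + c₂) * E ≤ c₁ * (E / (1 + E)) + c₂ * E := by
      have h1 : (c₁ / (1 + c) + c₂) * E = c₁ * (E / (1 + c)) + c₂ * E := by ring
      nlinarith
    have hDpos : 0 < (c₁ / (1 + c) + c₂) * E := by positivity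
    have := div_le_div₀ (by positivity : (0:ℝ) ≤ (c₁ + c₂) * E) hN hDpos hD
    rwa [mul_div_mul_right _ _ hE.ne'] at this
  · -- second bound
    have hsq : E / (1 + E) ^ 2 ≤ E := by
      rw [div_le_iff₀ (by positivity)]
      nlinarith [mul_pos hE hE, mul_pos (mul_pos hE hE) hE]
    have hN : c₁ * (E / (1 + E) ^ 2) + c₂ * E ≤ (c₁ + c₂) * E := by nlinarith
    have hsec := secant_log_bound c E hc hE hEc
    have hD : (c₁ * Real.log (1 + c) / c + c₂) * E
        ≤ c₁ * Real.log (1 + E) + c₂ * E := by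
      have h1 : (c₁ * Real.log (1 + c) / c + c₂) * E
          = c₁ * (Real.log (1 + c) / c * E) + c₂ * E := by ring
      nlinarith
    have hDpos : 0 < (c₁ * Real.log (1 + c) / c + c₂) * E := by positivity
    have := div_le_div₀ (by positivity : (0:ℝ) ≤ (c₁ + c₂) * E) hN hDpos hD
    rwa [mul_div_mul_right _ _ hE.ne'] at this
end
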